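/- arXiv:2511.03190 — 2 statements merged into one kernel-verified Lean document; each statement's English description precedes it below -/
import Mathlib

section
/- Let N ≥ 1 and x ∈ ℝᴺ. For t ∈ ℝ let p(t) be the softmax distribution of the scaled scores t·x, i.e. p(t)ⱼ = exp(t·xⱼ)/∑ₗ exp(t·xₗ), and let H(p(t)) = −∑ⱼ p(t)ⱼ log p(t)ⱼ. Then, as t → 0, (log N − H(p(t)))/t² converges to (1/2)·((1/N)∑ⱼ xⱼ² − ((1/N)∑ⱼ xⱼ)²), i.e. half the empirical variance of the scores x. -/
open Filter

/-- Shannon entropy of a vector `p : Fin n → ℝ` (natural log). -/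
noncomputable def shannonEntropy {n : ℕ} (p : Fin n → ℝ) : ℝ :=
  -∑ i, p i * Real.log (p i)

/-- Softmax distribution of a score vector. -/
noncomputable def softmax {N : ℕ} (x : Fin N → ℝ) : Fin N → ℝ :=
  fun j => Real.exp (x j) / ∑ l, Real.exp (x l)

/-- As `t → 0`, the entropy deficit of `softmax (t • x)` satisfies
`(log N − H(softmax (t • x))) / t² → (1/2) · Var(x)`, where `Var(x)` is the
empirical variance of the scores. -/
theorem entropy_deficit_softmax_scaled_tendsto_half_variance
    {N : ℕ} (hN : 1 ≤ N) (x : Fin N → ℝ) :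
    Tendsto
      (fun t : ℝ =>
        (Real.log N - shannonEntropy (softmax (fun j => t * x j))) / t ^ 2)
      (nhdsWithin 0 {0}ᶜ)
      (nhds ((1 / 2) *
        ((1 / N) * ∑ j, (x j) ^ 2 - ((1 / N) * ∑ j, x j) ^ 2))) := by
  have hNe : Nonempty (Fin N) := Fin.pos_iff_nonempty.mp hN
  have hNpos : (0 : ℝ) < (N : ℝ) := by exact_mod_cast hN
  set S : ℝ → ℝ := fun t => ∑ l, Real.exp (t * x l) with hSdef
  set A : ℝ → ℝ := fun t => ∑ l, x l * Real.exp (t * x l) with hAdef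
  set B : ℝ → ℝ := fun t => ∑ l, x l ^ 2 * Real.exp (t * x l) with hBdef
  have hSpos : ∀ t, 0 < S t := fun t =>
    Finset.sum_pos (fun l _ => Real.exp_pos _) Finset.univ_nonempty
  have hSne : ∀ t, S t ≠ 0 := fun t => (hSpos t).ne'
  -- derivatives
  have hSder : ∀ t, HasDerivAt S (A t) t := by
    intro t
    have := HasDerivAt.fun_sum (fun l (_ : l ∈ Finset.univ) =>
      ((hasDerivAt_mul_const (x l)).exp :
        HasDerivAt (fun s : ℝ => Real.exp (s * x l)) (Real.exp (t * x l) * x l) t))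
    simpa [mul_comm] using this
  have hAder : ∀ t, HasDerivAt A (B t) t := by
    intro t
    have := HasDerivAt.fun_sum (fun l (_ : l ∈ Finset.univ) =>
      (((hasDerivAt_mul_const (x l)).exp).const_mul (x l) :
        HasDerivAt (fun s : ℝ => x l * Real.exp (s * x l))
          (x l * (Real.exp (t * x l) * x l)) t))
    refine this.congr_deriv ?_
    exact Finset.sum_congr rfl fun l _ => by ring
  -- entropy identity
  have hent : ∀ t : ℝ, shannonEntropy (softmax (fun j => t * x j)) =
      Real.log (S t) - t * A t / S t := by
    intro t
    unfold shannonEntropy softmax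
    change -∑ j, Real.exp (t * x j) / S t * Real.log (Real.exp (t * x j) / S t) = _
    have hlog : ∀ j, Real.log (Real.exp (t * x j) / S t)
        = t * x j - Real.log (S t) := fun j => by
      rw [Real.log_div (Real.exp_ne_zero _) (hSne t), Real.log_exp]
    simp only [hlog]
    have h1 : ∑ j, Real.exp (t * x j) / S t * (t * x j - Real.log (S t))
        = (∑ j, Real.exp (t * x j) * (t * x j - Real.log (S t))) / S t := by
      rw [Finset.sum_div]; exact Finset.sum_congr rfl (fun j _ => by ring)
    have h2 : ∑ j, Real.exp (t * x j) * (t * x j - Real.log (S t))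
        = t * A t - Real.log (S t) * S t := by
      rw [hAdef, hSdef]
      rw [Finset.mul_sum, Finset.mul_sum, ← Finset.sum_sub_distrib]
      exact Finset.sum_congr rfl (fun j _ => by ring)
    rw [h1, h2]
    rw [sub_div, mul_div_cancel_right₀ _ (hSne t)]; ring
  -- the numerator function and its derivative
  set g : ℝ → ℝ := fun t => Real.log N - (Real.log (S t) - t * A t / S t) with hgdef
  set g' : ℝ → ℝ := fun t => t * (B t * S t - A t ^ 2) / S t ^ 2 with hg'def
  have hgder : ∀ t, HasDerivAt g (g' t) t := by
    intro t
    have hlogS : HasDerivAt (fun s => Real.log (S s)) (A t / S t) t :=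
      (hSder t).log (hSne t)
    have hnum : HasDerivAt (fun s : ℝ => s * A s) (1 * A t + t * B t) t :=
      (hasDerivAt_id t).mul (hAder t)
    have hfrac : HasDerivAt (fun s : ℝ => s * A s / S s)
        (((1 * A t + t * B t) * S t - t * A t * A t) / S t ^ 2) t :=
      hnum.div (hSder t) (hSne t)
    have := (hlogS.sub hfrac).const_sub (Real.log N)
    refine this.congr_deriv ?_
    rw [hg'def]
    field_simp
    ring
  -- continuity
  have hScont : Continuous S := continuous_finset_sum _ fun l _ =>
    Real.continuous_exp.comp (continuous_id.mul continuous_const)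
  have hAcont : Continuous A := continuous_finset_sum _ fun l _ =>
    continuous_const.mul (Real.continuous_exp.comp (continuous_id.mul continuous_const))
  have hBcont : Continuous B := continuous_finset_sum _ fun l _ =>
    continuous_const.mul (Real.continuous_exp.comp (continuous_id.mul continuous_const))
  -- values at 0
  have hS0 : S 0 = N := by simp [hSdef]
  have hA0 : A 0 = ∑ j, x j := by simp [hAdef]
  have hB0 : B 0 = ∑ j, (x j) ^ 2 := by simp [hBdef]
  have hg0 : g 0 = 0 := by
    simp [hgdef, hS0]
  -- limits for L'Hôpital
  have hfa : Tendsto g (nhdsWithin 0 {0}ᶜ) (nhds 0) := by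
    apply tendsto_nhdsWithin_of_tendsto_nhds
    have hgcont : Continuous g :=
      continuous_const.sub ((hScont.log hSne).sub
        ((continuous_id.mul hAcont).div hScont hSne))
    exact hgcont.tendsto' 0 0 hg0
  have hga : Tendsto (fun t : ℝ => t ^ 2) (nhdsWithin 0 {0}ᶜ) (nhds 0) := by
    apply tendsto_nhdsWithin_of_tendsto_nhds
    exact (continuous_pow 2).tendsto' 0 0 (by simp)
  set L : ℝ := (1 / 2) * ((1 / N) * ∑ j, (x j) ^ 2 - ((1 / N) * ∑ j, x j) ^ 2) with hLdef
  have hdiv : Tendsto (fun t => g' t / (2 * t)) (nhdsWithin 0 {0}ᶜ) (nhds L) := by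
    have hφcont : Continuous (fun t => (B t * S t - A t ^ 2) / (2 * S t ^ 2)) :=
      ((hBcont.mul hScont).sub (hAcont.pow 2)).div
        (continuous_const.mul (hScont.pow 2))
        (fun t => by positivity)
    have hφ0 : (B 0 * S 0 - A 0 ^ 2) / (2 * S 0 ^ 2) = L := by
      rw [hS0, hA0, hB0, hLdef]
      field_simp
    have hφ : Tendsto (fun t => (B t * S t - A t ^ 2) / (2 * S t ^ 2))
        (nhdsWithin 0 {0}ᶜ) (nhds L) :=
      tendsto_nhdsWithin_of_tendsto_nhds (hφcont.tendsto' 0 L hφ0)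
    apply hφ.congr'
    filter_upwards [self_mem_nhdsWithin] with t ht
    have ht0 : t ≠ 0 := ht
    rw [hg'def]
    field_simp
  have hg'ne : ∀ᶠ t in nhdsWithin (0:ℝ) {0}ᶜ, (2 * t : ℝ) ≠ 0 := by
    filter_upwards [self_mem_nhdsWithin] with t ht
    exact mul_ne_zero two_ne_zero ht
  have hmain : Tendsto (fun t => g t / t ^ 2) (nhdsWithin 0 {0}ᶜ) (nhds L) := by
    refine HasDerivAt.lhopital_zero_nhdsNE
      (Filter.Eventually.of_forall hgder)
      (Filter.Eventually.of_forall (fun t => by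
        simpa using (hasDerivAt_pow 2 t : HasDerivAt (fun s : ℝ => s ^ 2) _ t)))
      hg'ne hfa hga hdiv
  refine hmain.congr (fun t => ?_)
  rw [hgdef, hent t]
end

section
/- Let N ≥ 1 and let x ∈ ℝᴺ with ∑ⱼ xⱼ = 0. For θ > maxⱼ |xⱼ| define the normalized linear distribution p(θ) by p(θ)ⱼ = (1 + xⱼ/θ)/N; then p(θ)ⱼ > 0 for all j and ∑ⱼ p(θ)ⱼ = 1. Moreover its entropy satisfies θ²·(log N − H(p(θ))) → (∑ⱼ xⱼ²)/(2N) as θ → +∞, where H(p) = −∑ⱼ pⱼ log pⱼ. -/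
open Filter

lemma log_one_add_div_self :
    Tendsto (fun t : ℝ => Real.log (1 + t) / t) (nhdsWithin 0 {(0:ℝ)}ᶜ) (nhds 1) := by
  have h := hasDerivAt_iff_tendsto_slope.mp (Real.hasDerivAt_log (one_ne_zero))
  have hmap : Tendsto (fun t : ℝ => 1 + t) (nhdsWithin 0 {(0:ℝ)}ᶜ)
      (nhdsWithin 1 {(1:ℝ)}ᶜ) := by
    rw [tendsto_nhdsWithin_iff]
    constructor
    · have : Tendsto (fun t : ℝ => 1 + t) (nhds 0) (nhds (1 + 0)) :=
        (continuous_const.add continuous_id).tendsto 0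
      simpa using this.mono_left nhdsWithin_le_nhds
    · filter_upwards [self_mem_nhdsWithin] with t ht
      simp only [Set.mem_compl_iff, Set.mem_singleton_iff] at ht ⊢
      intro h'; apply ht; linarith
  have := h.comp hmap
  simp only [inv_one] at this
  refine this.congr fun t => ?_
  simp [slope_def_field, Function.comp]

lemma base_limit :
    Tendsto (fun t : ℝ => ((1 + t) * Real.log (1 + t) - t) / t ^ 2)
      (nhdsWithin 0 {(0:ℝ)}ᶜ) (nhds (1/2)) := by
  have hmem : ∀ᶠ t : ℝ in nhdsWithin 0 {(0:ℝ)}ᶜ, (0:ℝ) < 1 + t := by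
    have : ∀ᶠ t : ℝ in nhds 0, (0:ℝ) < 1 + t := by
      have : Tendsto (fun t : ℝ => 1 + t) (nhds 0) (nhds 1) := by
        simpa using (continuous_add_left (1:ℝ)).tendsto (0:ℝ)
      exact this.eventually (eventually_gt_nhds one_pos)
    exact this.filter_mono nhdsWithin_le_nhds
  apply HasDerivAt.lhopital_zero_nhdsNE
    (f' := fun t => Real.log (1 + t)) (g' := fun t => 2 * t)
  · filter_upwards [hmem] with t ht
    have h1 : HasDerivAt (fun s : ℝ => 1 + s) 1 t := by
      simpa using (hasDerivAt_id t).const_add (1:ℝ)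
    have h2 : HasDerivAt (fun s : ℝ => Real.log (1 + s)) ((1 + t)⁻¹ * 1) t :=
      (Real.hasDerivAt_log (ne_of_gt ht)).comp t h1
    have h3 := (h1.mul h2).sub (hasDerivAt_id t)
    have e : 1 * Real.log (1 + t) + (1 + t) * ((1 + t)⁻¹ * 1) - 1 = Real.log (1 + t) := by
      rw [mul_one, mul_inv_cancel₀ (ne_of_gt ht)]; ring
    rw [e] at h3
    exact h3
  · filter_upwards with t
    have : HasDerivAt (fun s : ℝ => s ^ 2) (2 * t ^ 1) t := hasDerivAt_pow 2 t
    simpa using this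
  · filter_upwards [self_mem_nhdsWithin] with t ht
    simp only [Set.mem_compl_iff, Set.mem_singleton_iff] at ht
    exact mul_ne_zero two_ne_zero ht
  · have : Tendsto (fun t : ℝ => (1 + t) * Real.log (1 + t) - t) (nhds 0) (nhds 0) := by
      have hc : ContinuousAt (fun t : ℝ => (1 + t) * Real.log (1 + t) - t) 0 := by
        have h1 : ContinuousAt (fun t : ℝ => 1 + t) 0 := by fun_prop
        have h2 : ContinuousAt Real.log ((fun t : ℝ => 1 + t) 0) := by
          apply Real.continuousAt_log; norm_num
        exact (h1.mul (h2.comp h1)).sub continuousAt_id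
      simpa using hc.tendsto
    exact this.mono_left nhdsWithin_le_nhds
  · have : Tendsto (fun t : ℝ => t ^ 2) (nhds 0) (nhds 0) := by
      simpa using (continuous_pow 2).tendsto (0:ℝ)
    exact this.mono_left nhdsWithin_le_nhds
  · have h := log_one_add_div_self.div_const 2
    refine h.congr fun t => ?_
    rw [div_div]
    ring_nf

lemma term_limit (a : ℝ) :
    Tendsto (fun θ : ℝ => θ ^ 2 * ((1 + a / θ) * Real.log (1 + a / θ) - a / θ))
      atTop (nhds (a ^ 2 / 2)) := by
  rcases eq_or_ne a 0 with rfl | ha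
  · simpa using tendsto_const_nhds (α := ℝ) (f := atTop) (a := (0:ℝ))
  · have hmap : Tendsto (fun θ : ℝ => a / θ) atTop (nhdsWithin 0 {(0:ℝ)}ᶜ) := by
      rw [tendsto_nhdsWithin_iff]
      constructor
      · exact tendsto_const_nhds.div_atTop tendsto_id
      · filter_upwards [eventually_gt_atTop (0:ℝ)] with θ hθ
        simp only [Set.mem_compl_iff, Set.mem_singleton_iff]
        exact div_ne_zero ha (ne_of_gt hθ)
    have h := (base_limit.comp hmap).const_mul (a ^ 2)
    have heq : a ^ 2 * (1/2) = a ^ 2 / 2 := by ring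
    rw [heq] at h
    refine h.congr' ?_
    filter_upwards [eventually_gt_atTop (0:ℝ)] with θ hθ
    have hθ' : θ ≠ 0 := ne_of_gt hθ
    simp only [Function.comp]
    have ha2 : a ^ 2 ≠ 0 := pow_ne_zero 2 ha
    set E := (1 + a / θ) * Real.log (1 + a / θ) - a / θ with hE
    field_simp

/-- The normalized linear distribution `p(θ) j = (1 + x j / θ) / N` with centered
scores (`∑ j, x j = 0`): for `θ > max j |x j|` it is a strictly positive
probability distribution, and its entropy deficit satisfies
`θ² · (log N − H(p(θ))) → (∑ j, x j²) / (2N)` as `θ → +∞`. -/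
theorem normalized_linear_distribution_entropy
    {N : ℕ} (hN : 1 ≤ N) (x : Fin N → ℝ) (hx : ∑ j, x j = 0) :
    (∀ θ : ℝ, (∀ j, |x j| < θ) →
        (∀ j, 0 < (1 + x j / θ) / N) ∧ ∑ j, (1 + x j / θ) / N = 1)
      ∧ Tendsto
          (fun θ : ℝ =>
            θ ^ 2 *
              (Real.log N - shannonEntropy (fun j => (1 + x j / θ) / N)))
          atTop
          (nhds ((∑ j, (x j) ^ 2) / (2 * N))) := by
  have hNpos : (0:ℝ) < N := by exact_mod_cast hN
  have hNne : (N:ℝ) ≠ 0 := ne_of_gt hNpos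
  have part1 : ∀ θ : ℝ, (∀ j, |x j| < θ) →
      (∀ j, 0 < (1 + x j / θ) / N) ∧ ∑ j, (1 + x j / θ) / N = 1 := by
    intro θ hθ
    have hθ0 : 0 < θ := lt_of_le_of_lt (abs_nonneg _) (hθ ⟨0, hN⟩)
    have hpos : ∀ j, 0 < 1 + x j / θ := by
      intro j
      have h1 := (abs_lt.mp (hθ j)).1
      have : -1 < x j / θ := by rw [lt_div_iff₀ hθ0]; linarith
      linarith
    have hsx : ∑ j, x j / θ = 0 := by rw [← Finset.sum_div, hx, zero_div]
    refine ⟨fun j => div_pos (hpos j) hNpos, ?_⟩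
    rw [← Finset.sum_div, Finset.sum_add_distrib, hsx, add_zero,
      Finset.sum_const, Finset.card_univ, Fintype.card_fin, nsmul_eq_mul,
      mul_one, div_self hNne]
  refine ⟨part1, ?_⟩
  have hsum : Tendsto
      (fun θ : ℝ => (∑ j, θ ^ 2 * ((1 + x j / θ) * Real.log (1 + x j / θ) - x j / θ)) / (N:ℝ))
      atTop (nhds ((∑ j, (x j) ^ 2) / (2 * (N:ℝ)))) := by
    have h := (tendsto_finset_sum Finset.univ
      (fun j _ => term_limit (x j))).div_const (N:ℝ)
    have h2 : (∑ j, (x j) ^ 2 / 2) / (N:ℝ) = (∑ j, (x j) ^ 2) / (2 * (N:ℝ)) := by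
      rw [← Finset.sum_div, div_div]
    rwa [h2] at h
  refine hsum.congr' ?_
  have hall : ∀ᶠ θ : ℝ in atTop, ∀ j, |x j| < θ :=
    eventually_all.mpr fun j => eventually_gt_atTop _
  filter_upwards [hall] with θ hθ
  have hθ0 : 0 < θ := lt_of_le_of_lt (abs_nonneg _) (hθ ⟨0, hN⟩)
  have hpos : ∀ j, 0 < 1 + x j / θ := by
    intro j
    have h1 := (abs_lt.mp (hθ j)).1
    have : -1 < x j / θ := by rw [lt_div_iff₀ hθ0]; linarith
    linarith
  have hsx : ∑ j, x j / θ = 0 := by rw [← Finset.sum_div, hx, zero_div]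
  have hsum1 : ∑ j, (1 + x j / θ) / N = 1 := (part1 θ hθ).2
  have hH : shannonEntropy (fun j => (1 + x j / θ) / N)
      = Real.log N - (∑ j, (1 + x j / θ) * Real.log (1 + x j / θ)) / N := by
    unfold shannonEntropy
    have hterm : ∀ j : Fin N, (1 + x j / θ) / N * Real.log ((1 + x j / θ) / N)
        = ((1 + x j / θ) * Real.log (1 + x j / θ)) / N
          - Real.log N * ((1 + x j / θ) / N) := by
      intro j
      rw [Real.log_div (ne_of_gt (hpos j)) hNne]
      ring
    simp_rw [hterm]
    rw [Finset.sum_sub_distrib, ← Finset.sum_div, ← Finset.mul_sum, hsum1, mul_one]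
    ring
  rw [hH]
  have hA : ∑ j, θ ^ 2 * ((1 + x j / θ) * Real.log (1 + x j / θ) - x j / θ)
      = θ ^ 2 * ∑ j, (1 + x j / θ) * Real.log (1 + x j / θ) := by
    rw [← Finset.mul_sum, Finset.sum_sub_distrib, hsx, sub_zero]
  rw [hA]
  ring
end
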